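/- Let A : ℂ → M_n(ℂ) be analytic near z₀ with A(z₀) having a simple eigenvalue 0, with right eigenvector v and left eigenvector w (A(z₀)v = 0, A(z₀)*w = 0, ‖v‖ = ‖w‖ = 1), and suppose ⟨w, A'(z₀)v⟩ ≠ 0. Then for z near z₀, z ≠ z₀, A(z) is invertible and (z − z₀) A(z)⁻¹ converges as z → z₀ to (1/⟨w, A'(z₀)v⟩) |v⟩⟨w|. -/

import Mathlib

open Matrix Filter Topology Module

/-!
The columns of `adjugate (A z₀)` lie in `ker (A z₀) = ℂ v` and its rows in the left kernel, which
is also one-dimensional, so `adjugate (A z₀) = α |v⟩⟨w|`; `α ≠ 0` because replacing a suitable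
row of `A z₀` yields an invertible matrix. Since `det (A z) = w* A(z) adj(A z) w` and
`w* A(z₀) = 0`, the derivative of `det ∘ A` at `z₀` is
`w* A'(z₀) adj(A z₀) w = α ⟨w, A'(z₀) v⟩ ≠ 0`.
Hence `(z - z₀) A(z)⁻¹ = adj(A z) / slope (det ∘ A) z₀ z → adj(A z₀) / (α ⟨w, A'(z₀) v⟩)`.
-/

namespace Matrix

section CorankOne

variable {K n : Type*} [Field K] [Fintype n]

theorem finrank_ker_mulVecLin_transpose (A : Matrix n n K) :
    finrank K (LinearMap.ker Aᵀ.mulVecLin) = finrank K (LinearMap.ker A.mulVecLin) := by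
  have hrank := A.rank_transpose
  have h := A.mulVecLin.finrank_range_add_finrank_ker
  have hT := Aᵀ.mulVecLin.finrank_range_add_finrank_ker
  simp only [rank] at hrank
  omega

theorem exists_eq_smul_of_vecMul_eq_zero {A : Matrix n n K} {u v : n → K} (hv0 : v ≠ 0)
    (hv : A *ᵥ v = 0) (hker : ∀ x, A *ᵥ x = 0 → ∃ c : K, x = c • v)
    (hu0 : u ≠ 0) (hu : u ᵥ* A = 0) {y : n → K} (hy : y ᵥ* A = 0) : ∃ c : K, y = c • u := by
  have hspan : LinearMap.ker A.mulVecLin = K ∙ v := by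
    ext x
    simp only [LinearMap.mem_ker, mulVecLin_apply, Submodule.mem_span_singleton]
    refine ⟨fun hx => ?_, ?_⟩
    · obtain ⟨c, rfl⟩ := hker x hx
      exact ⟨c, rfl⟩
    · rintro ⟨c, rfl⟩
      rw [mulVec_smul, hv, smul_zero]
  have hdim : finrank K (LinearMap.ker Aᵀ.mulVecLin) = 1 := by
    rw [finrank_ker_mulVecLin_transpose, hspan, finrank_span_singleton hv0]
  have hmem : ∀ x, x ᵥ* A = 0 → x ∈ LinearMap.ker Aᵀ.mulVecLin := fun x hx => by
    rwa [LinearMap.mem_ker, mulVecLin_apply, mulVec_transpose]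
  obtain ⟨c, hc⟩ := (finrank_eq_one_iff_of_nonzero' (⟨u, hmem u hu⟩ : LinearMap.ker _)
    (by simpa using hu0)).1 hdim ⟨y, hmem y hy⟩
  exact ⟨c, congrArg Subtype.val hc.symm⟩

variable [DecidableEq n]

theorem det_updateRow_eq_vecMul_adjugate {R : Type*} [CommRing R] (A : Matrix n n R) (i : n)
    (y : n → R) : (A.updateRow i y).det = (y ᵥ* adjugate A) i := by
  rw [← cramer_transpose_apply, cramer_eq_adjugate_mulVec, ← adjugate_transpose, mulVec_transpose]

theorem det_updateRow_ne_zero {A : Matrix n n K} {u v y : n → K} {i : n}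
    (hker : ∀ x, A *ᵥ x = 0 → ∃ c : K, x = c • v) (hu : u ᵥ* A = 0) (hui : u i ≠ 0)
    (hyv : y ⬝ᵥ v ≠ 0) : (A.updateRow i y).det ≠ 0 := by
  intro hdet
  obtain ⟨x, hx0, hx⟩ := exists_mulVec_eq_zero_iff.2 hdet
  have hAx : A *ᵥ x = Pi.single i ((A *ᵥ x) i) := by
    ext k
    rcases eq_or_ne k i with rfl | hk
    · simp
    · simpa [hk, mulVec, updateRow_ne hk] using congrFun hx k
  have hAxi : (A *ᵥ x) i = 0 := by
    have h := dotProduct_mulVec u A x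
    rw [hu, zero_dotProduct, hAx, dotProduct_single] at h
    exact (mul_eq_zero.1 h).resolve_left hui
  obtain ⟨c, rfl⟩ := hker x (by rw [hAx, hAxi, Pi.single_zero])
  have hyx : c * (y ⬝ᵥ v) = 0 := by simpa [mulVec, dotProduct_smul] using congrFun hx i
  exact hx0 (by simp [(mul_eq_zero.1 hyx).resolve_right hyv])

theorem exists_adjugate_eq_smul_vecMulVec {A : Matrix n n K} {u v : n → K} (hv0 : v ≠ 0)
    (hv : A *ᵥ v = 0) (hker : ∀ x, A *ᵥ x = 0 → ∃ c : K, x = c • v)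
    (hu0 : u ≠ 0) (hu : u ᵥ* A = 0) : ∃ α : K, α ≠ 0 ∧ adjugate A = α • vecMulVec v u := by
  have hdet : A.det = 0 := exists_mulVec_eq_zero_iff.1 ⟨v, hv0, hv⟩
  obtain ⟨c, hc⟩ : ∃ c : n → K, adjugate A = vecMulVec v c := by
    have hcol : ∀ j, ∃ a : K, adjugate A *ᵥ Pi.single j 1 = a • v := fun j =>
      hker _ (by rw [mulVec_mulVec, mul_adjugate, hdet, zero_smul, zero_mulVec])
    choose c hc using hcol
    refine ⟨c, ext fun i j => ?_⟩
    simpa [vecMulVec_apply, mul_comm] using congrFun (hc j) i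
  have hcA : c ᵥ* A = 0 := by
    have h : vecMulVec v (c ᵥ* A) = 0 := by
      rw [← vecMulVec_mul, ← hc, adjugate_mul, hdet, zero_smul]
    exact (vecMulVec_eq_zero.1 h).resolve_left hv0
  obtain ⟨α, rfl⟩ := exists_eq_smul_of_vecMul_eq_zero hv0 hv hker hu0 hu hcA
  refine ⟨α, ?_, by rw [hc, vecMulVec_smul]⟩
  rintro rfl
  obtain ⟨i, hi⟩ := Function.ne_iff.1 hu0
  obtain ⟨k, hk⟩ := Function.ne_iff.1 hv0
  have h := det_updateRow_ne_zero (y := Pi.single k 1) hker hu hi (by simpa using hk)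
  simp [det_updateRow_eq_vecMul_adjugate, hc] at h

end CorankOne

theorem vecMul_dotProduct_adjugate_mulVec {R n : Type*} [CommRing R] [Fintype n] [DecidableEq n]
    (M : Matrix n n R) (u x : n → R) :
    (u ᵥ* M) ⬝ᵥ (adjugate M *ᵥ x) = M.det * (u ⬝ᵥ x) := by
  rw [← dotProduct_mulVec, mulVec_mulVec, mul_adjugate, smul_mulVec, one_mulVec, dotProduct_smul,
    smul_eq_mul]

end Matrix

section Calculus

variable {𝕜 n : Type*} [NontriviallyNormedField 𝕜] [Fintype n]

theorem HasDerivAt.dotProduct_of_eq_zero {f g : 𝕜 → n → 𝕜} {f' : n → 𝕜} {z₀ : 𝕜}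
    (hf : HasDerivAt f f' z₀) (hf0 : f z₀ = 0) (hg : ContinuousAt g z₀) :
    HasDerivAt (fun z => f z ⬝ᵥ g z) (f' ⬝ᵥ g z₀) z₀ := by
  have hslope : slope (fun z => f z ⬝ᵥ g z) z₀ = fun z => slope f z₀ z ⬝ᵥ g z := by
    funext z
    rw [slope_def_module, slope_def_module, hf0, sub_zero, zero_dotProduct, sub_zero,
      smul_dotProduct]
  have hdot : Continuous fun p : (n → 𝕜) × (n → 𝕜) => p.1 ⬝ᵥ p.2 :=
    continuous_fst.dotProduct continuous_snd
  rw [hasDerivAt_iff_tendsto_slope, hslope]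
  exact (hdot.tendsto _).comp ((hasDerivAt_iff_tendsto_slope.1 hf).prodMk_nhds
    (hg.tendsto.mono_left nhdsWithin_le_nhds))

theorem hasDerivAt_vecMul {m : Type*} {M : 𝕜 → Matrix n m 𝕜} {M' : Matrix n m 𝕜} {z₀ : 𝕜}
    (hM : ∀ i j, HasDerivAt (fun z => M z i j) (M' i j) z₀) (u : n → 𝕜) :
    HasDerivAt (fun z => u ᵥ* M z) (u ᵥ* M') z₀ :=
  hasDerivAt_pi.2 fun j => HasDerivAt.fun_sum fun i _ => (hM i j).const_mul (u i)

variable [DecidableEq n]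

theorem hasDerivAt_det_of_vecMul_eq_zero {M : 𝕜 → Matrix n n 𝕜} {M' : Matrix n n 𝕜} {z₀ : 𝕜}
    (hM : ∀ i j, HasDerivAt (fun z => M z i j) (M' i j) z₀) {u x : n → 𝕜} (hux : u ⬝ᵥ x = 1)
    (hu : u ᵥ* M z₀ = 0) :
    HasDerivAt (fun z => (M z).det) ((u ᵥ* M') ⬝ᵥ (adjugate (M z₀) *ᵥ x)) z₀ := by
  have hMc : ContinuousAt M z₀ :=
    continuousAt_pi.2 fun i => continuousAt_pi.2 fun j => (hM i j).continuousAt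
  have h := (hasDerivAt_vecMul hM u).dotProduct_of_eq_zero hu
    (ContinuousAt.comp (g := fun N : Matrix n n 𝕜 => adjugate N *ᵥ x)
      (continuous_id.matrix_adjugate.matrix_mulVec continuous_const).continuousAt hMc)
  simpa [vecMul_dotProduct_adjugate_mulVec, hux] using h

theorem tendsto_sub_smul_inv_of_hasDerivAt_det {M : 𝕜 → Matrix n n 𝕜} {z₀ d : 𝕜}
    (hdet : HasDerivAt (fun z => (M z).det) d z₀) (hd : d ≠ 0) (hdet0 : (M z₀).det = 0)
    (hadj : ContinuousAt (fun z => adjugate (M z)) z₀) :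
    Tendsto (fun z => (z - z₀) • (M z)⁻¹) (𝓝[≠] z₀) (𝓝 (d⁻¹ • adjugate (M z₀))) := by
  have hslope := hasDerivAt_iff_tendsto_slope.1 hdet
  have heq : (fun z => (z - z₀) • (M z)⁻¹) =
      fun z => (slope (fun z => (M z).det) z₀ z)⁻¹ • adjugate (M z) := by
    funext z
    rw [inv_def, Ring.inverse_eq_inv', smul_smul, slope_def_field, hdet0, sub_zero, inv_div,
      div_eq_mul_inv]
  rw [heq]
  exact (hslope.inv₀ hd).smul (hadj.tendsto.mono_left nhdsWithin_le_nhds)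

end Calculus

/-- Let `A : ℂ → Mₙ(ℂ)` be analytic near `z₀`, with `A z₀` having a simple
eigenvalue `0` with normalized right eigenvector `v` and left eigenvector `w`
(`A z₀ v = 0`, `(A z₀)* w = 0`), and suppose `⟨w, A'(z₀) v⟩ ≠ 0`. Then for `z` near
`z₀`, `z ≠ z₀`, `A z` is invertible and `(z - z₀) A(z)⁻¹` converges as `z → z₀` to
`(1/⟨w, A'(z₀) v⟩) |v⟩⟨w|`, the rank-one matrix `x ↦ ⟨w, x⟩ v`. -/
theorem simple_zero_eigenvalue_resolvent_residue
    (n : ℕ) (A : ℂ → Matrix (Fin n) (Fin n) ℂ) (z₀ : ℂ)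
    (hA : ∀ i j, AnalyticAt ℂ (fun z => A z i j) z₀)
    (v w : Fin n → ℂ)
    (hv : A z₀ *ᵥ v = 0) (hw : (A z₀)ᴴ *ᵥ w = 0)
    (hvnorm : star v ⬝ᵥ v = 1) (hwnorm : star w ⬝ᵥ w = 1)
    (hsimple : ∀ x : Fin n → ℂ, A z₀ *ᵥ x = 0 → ∃ c : ℂ, x = c • v)
    (hc : star w ⬝ᵥ ((Matrix.of fun i j => deriv (fun z => A z i j) z₀) *ᵥ v) ≠ 0) :
    (∀ᶠ z in 𝓝[≠] z₀, IsUnit (A z).det) ∧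
    Tendsto (fun z : ℂ => (z - z₀) • (A z)⁻¹) (𝓝[≠] z₀)
      (𝓝 ((star w ⬝ᵥ ((Matrix.of fun i j => deriv (fun z => A z i j) z₀) *ᵥ v))⁻¹
        • Matrix.vecMulVec v (star w))) := by
  set A' : Matrix (Fin n) (Fin n) ℂ := Matrix.of fun i j => deriv (fun z => A z i j) z₀
  have hv0 : v ≠ 0 := by rintro rfl; simp at hvnorm
  have hw0 : star w ≠ 0 := by rintro h; simp [h] at hwnorm
  have hwA : star w ᵥ* A z₀ = 0 := by simpa [hw] using (star_mulVec (A z₀)ᴴ w).symm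
  obtain ⟨α, hα, hadj⟩ := exists_adjugate_eq_smul_vecMulVec hv0 hv hsimple hw0 hwA
  have hA' : ∀ i j, HasDerivAt (fun z => A z i j) (A' i j) z₀ :=
    fun i j => (hA i j).differentiableAt.hasDerivAt
  have hD : HasDerivAt (fun z => (A z).det) (α * (star w ⬝ᵥ (A' *ᵥ v))) z₀ := by
    have hval : (star w ᵥ* A') ⬝ᵥ (adjugate (A z₀) *ᵥ w) = α * (star w ⬝ᵥ (A' *ᵥ v)) := by
      rw [hadj, smul_mulVec, vecMulVec_mulVec, hwnorm, dotProduct_smul, dotProduct_mulVec]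
      simp
    exact hval ▸ hasDerivAt_det_of_vecMul_eq_zero hA' hwnorm hwA
  have hd : α * (star w ⬝ᵥ (A' *ᵥ v)) ≠ 0 := mul_ne_zero hα hc
  have hAc : ContinuousAt A z₀ :=
    continuousAt_pi.2 fun i => continuousAt_pi.2 fun j => (hA i j).continuousAt
  have hdet0 : (A z₀).det = 0 := exists_mulVec_eq_zero_iff.1 ⟨v, hv0, hv⟩
  refine ⟨?_, ?_⟩
  · filter_upwards [hD.eventually_ne (c := 0) hd] with z hz using hz.isUnit
  · convert tendsto_sub_smul_inv_of_hasDerivAt_det hD hd hdet0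
      (continuous_id.matrix_adjugate.continuousAt.comp hAc) using 2
    rw [hadj, smul_smul]
    congr 1
    field_simp
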